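/- Let x_c := −(9/2)^{2/3} and let Σ_S ⊂ ℂ be the union of the three closed straight-line segments joining the origin to the three points x_c, x_c·e^{2πi/3}, and x_c·e^{−2πi/3}. Then there exists a unique function S, analytic on the open set ℂ ∖ Σ_S, such that 3·S(x)³ + 4·x·S(x) + 8 = 0 for all x ∈ ℂ ∖ Σ_S and S(x) → 0 as x → ∞. Moreover this function satisfies the sharper asymptotic condition S(x) = −2/x + O(|x|⁻⁴) as x → ∞. -/

import Mathlib

open Filter Asymptotics

/-- The corner point `x_c := −(9/2)^{2/3}` of the elliptic region. -/
noncomputable def xCorner : ℂ := -((((9 : ℝ) / 2) ^ ((2 : ℝ) / 3) : ℝ) : ℂ)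

/-- The contour `Σ_S`: the union of the three closed straight-line segments joining the
origin to the three branch points `x_c`, `x_c e^{2πi/3}`, `x_c e^{−2πi/3}` of the cubic
`3S³ + 4xS + 8 = 0`. -/
noncomputable def SigmaS : Set ℂ :=
  segment ℝ (0 : ℂ) xCorner ∪
    segment ℝ (0 : ℂ) (xCorner * Complex.exp (2 * Real.pi * Complex.I / 3)) ∪
    segment ℝ (0 : ℂ) (xCorner * Complex.exp (-(2 * Real.pi * Complex.I) / 3))

/-!
The substitution `S = -3h/x`, `v = 81/(4x³)` turns `3S³ + 4xS + 8 = 0` into `v h³ + 3h = 2`.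
Writing `v = z²` and `h = d/z`, this becomes `d³ + 3d = 2z`, solved by Cardano's formula
`d = c - c⁻¹` with `c = (z + √(1 + z²))^{1/3}`. The principal branches make `d` odd in `z`, so
`h` is independent of the choice of `√v`, and they are holomorphic as long as `1 + v` avoids
`(-∞, 0]`; for `v = 81/(4x³)` this means `x³ ∉ [x_c³, 0)`, i.e. `x ∉ Σ_S`. Since `d(0) = 0` and
`d` is holomorphic at `0`, `h` stays bounded as `v → 0`, and `S + 2/x = (81/4) h³ x⁻⁴` gives the
asymptotics.

For uniqueness: two roots of the cubic of modulus at most `1` coincide once `|x| > 9/4`, so any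
other solution tending to `0` agrees with `S` near infinity; since `Σ_S` is compact and
star-shaped about `0`, its complement is connected and the identity theorem applies.
-/

open Complex Topology Metric

lemma add_mem_slitPlane_of_sq_eq {z ρ : ℂ} (hρ : ρ ^ 2 = 1 + z ^ 2) (hre : 0 ≤ ρ.re) :
    z + ρ ∈ slitPlane := by
  -- otherwise `z + ρ` and its inverse `ρ - z` are both negative reals, and so is their sum `2ρ`
  have hmul : (z + ρ) * (ρ - z) = 1 := by linear_combination hρ
  rw [mem_slitPlane_iff_not_le_zero, nonpos_iff]
  rintro ⟨hle, him⟩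
  obtain ⟨a, ha⟩ : ∃ a : ℝ, z + ρ = a := ⟨(z + ρ).re, Complex.ext rfl (by simpa using him)⟩
  have ha0 : a ≠ 0 := by rintro rfl; simp [ha] at hmul
  have ha_neg : a < 0 := lt_of_le_of_ne (by simpa [ha] using hle) ha0
  have hsub : ρ - z = (a⁻¹ : ℝ) := by
    rw [ofReal_inv, ← ha]
    exact eq_inv_of_mul_eq_one_right hmul
  have h2ρ : 2 * ρ.re = a + a⁻¹ := by
    simpa [ha, hsub] using congrArg re (show 2 * ρ = (z + ρ) + (ρ - z) by ring)
  linarith [inv_lt_zero.mpr ha_neg]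

lemma Function.Even.differentiableAt_comp_cpow_inv_two {f : ℂ → ℂ} (hf : Function.Even f)
    {w : ℂ} (hw : w ≠ 0) (hdiff : ∀ ζ, ζ ^ 2 = w → DifferentiableAt ℂ f ζ) :
    DifferentiableAt ℂ (fun w => f (w ^ (2⁻¹ : ℂ))) w := by
  by_cases hslit : w ∈ slitPlane
  · exact (hdiff _ (cpow_ofNat_inv_pow w 2)).comp w (differentiableAt_id.cpow_const hslit)
  -- on the negative real axis use the square root `I * (-w) ^ (1/2)`, which is holomorphic there
  have hneg : -w ∈ slitPlane := by
    rw [mem_slitPlane_iff_not_le_zero, not_not, nonpos_iff] at hslit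
    have hre : w.re ≠ 0 := fun h => hw (Complex.ext h hslit.2)
    exact mem_slitPlane_iff.mpr (Or.inl (by simpa using lt_of_le_of_ne hslit.1 hre))
  have hsq : ∀ w', (I * (-w') ^ (2⁻¹ : ℂ)) ^ 2 = w' := fun w' => by
    rw [mul_pow, cpow_ofNat_inv_pow, I_sq]
    ring
  have hg : DifferentiableAt ℂ (fun w' => I * (-w') ^ (2⁻¹ : ℂ)) w :=
    (differentiableAt_id.neg.cpow_const hneg).const_mul I
  refine ((hdiff _ (hsq w)).comp w hg).congr_of_eventuallyEq (Eventually.of_forall fun w' => ?_)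
  rcases sq_eq_sq_iff_eq_or_eq_neg.mp ((cpow_ofNat_inv_pow w' 2).trans (hsq w').symm) with h | h
  · simp only [Function.comp, h]
  · simp only [Function.comp, h]
    exact hf _

lemma tendsto_cpow_inv_two_nhdsNE :
    Tendsto (fun v : ℂ => v ^ (2⁻¹ : ℂ)) (𝓝[≠] 0) (𝓝[≠] 0) := by
  refine tendsto_nhdsWithin_iff.mpr ⟨?_, eventually_nhdsWithin_of_forall fun v hv => ?_⟩
  · have h := continuousAt_cpow_const_of_re_pos (z := 0) (w := 2⁻¹) (Or.inl le_rfl) (by norm_num)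
    simpa using h.tendsto.mono_left nhdsWithin_le_nhds
  · exact ne_zero_pow two_ne_zero (by rwa [cpow_ofNat_inv_pow])

lemma tendsto_const_mul_inv_pow_cocompact {c : ℂ} (hc : c ≠ 0) {n : ℕ} (hn : n ≠ 0) :
    Tendsto (fun x : ℂ => c * x⁻¹ ^ n) (cocompact ℂ) (𝓝[≠] 0) := by
  rw [← cobounded_eq_cocompact]
  refine tendsto_nhdsWithin_iff.mpr ⟨?_, ?_⟩
  · simpa [hn] using (tendsto_inv₀_cobounded.pow n).const_mul c
  · filter_upwards [tendsto_inv₀_cobounded'.eventually self_mem_nhdsWithin] with x hx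
    simpa [hc, hn] using hx

lemma StarConvex.smul_notMem_of_one_le {E : Type*} [AddCommGroup E] [Module ℝ E] {s : Set E}
    (hs : StarConvex ℝ 0 s) {y : E} (hy : y ∉ s) {t : ℝ} (ht : 1 ≤ t) : t • y ∉ s := fun hts => by
  have ht0 : t ≠ 0 := (zero_lt_one.trans_le ht).ne'
  exact hy (by simpa [inv_smul_smul₀ ht0] using
    hs.smul_mem hts (inv_nonneg.mpr (zero_le_one.trans ht)) (inv_le_one_of_one_le₀ ht))

lemma StarConvex.isPreconnected_compl {E : Type*} [NormedAddCommGroup E] [NormedSpace ℝ E]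
    (hE : 1 < Module.rank ℝ E) {s : Set E} (hs : StarConvex ℝ 0 s)
    (hb : Bornology.IsBounded s) : IsPreconnected sᶜ := by
  rcases s.eq_empty_or_nonempty with rfl | hne
  · simpa using isPreconnected_univ
  have : Nontrivial E := rank_pos_iff_nontrivial.mp (zero_lt_one.trans hE)
  let ray (y : E) : Set E := (fun t : ℝ => t • y) '' Set.Ici 1
  have ray_pre (y : E) : IsPreconnected (ray y) :=
    isPreconnected_Ici.image _ (continuous_id.smul continuous_const).continuousOn
  have ray_subset {y : E} (hy : y ∉ s) : ray y ⊆ sᶜ := by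
    rintro _ ⟨t, ht, rfl⟩
    exact hs.smul_notMem_of_one_le hy ht
  have ray_meets_sphere {y : E} (hy : y ≠ 0) {ρ : ℝ} (hρ : ‖y‖ ≤ ρ) :
      (ρ / ‖y‖) • y ∈ ray y ∩ sphere 0 ρ := by
    have hny : 0 < ‖y‖ := norm_pos_iff.mpr hy
    refine ⟨⟨ρ / ‖y‖, (one_le_div hny).mpr hρ, rfl⟩, ?_⟩
    rw [mem_sphere_zero_iff_norm, norm_smul, Real.norm_of_nonneg (div_pos (hny.trans_le hρ) hny).le,
      div_mul_cancel₀ _ hny.ne']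
  obtain ⟨r, hr⟩ := hb.subset_closedBall 0
  have sphere_subset {ρ : ℝ} (hρ : r < ρ) : sphere (0 : E) ρ ⊆ sᶜ := fun z hz hzs => by
    have := mem_closedBall_zero_iff.mp (hr hzs)
    rw [mem_sphere_zero_iff_norm.mp hz] at this
    linarith
  obtain ⟨x₀, hx₀⟩ := exists_norm_eq E (by positivity : 0 ≤ |r| + 1)
  have hx₀s : x₀ ∉ s :=
    sphere_subset (by linarith [le_abs_self r]) (mem_sphere_zero_iff_norm.mpr hx₀)
  have hx₀0 : x₀ ≠ 0 := norm_pos_iff.mp (by rw [hx₀]; positivity)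
  -- the outward rays from `x₀` and from `y` both meet a sphere lying outside `s`
  refine isPreconnected_of_forall x₀ fun y hy => ?_
  have hy0 : y ≠ 0 := by rintro rfl; exact hy (hs.mem hne)
  set ρ := max (|r| + 1) ‖y‖
  have h₀ := ray_meets_sphere hx₀0 (hx₀.trans_le (le_max_left _ ‖y‖))
  have h₁ := ray_meets_sphere hy0 (le_max_right (|r| + 1) _)
  refine ⟨ray x₀ ∪ sphere 0 ρ ∪ ray y, ?_, Or.inl (Or.inl ⟨1, Set.self_mem_Ici, one_smul ℝ x₀⟩),
    Or.inr ⟨1, Set.self_mem_Ici, one_smul ℝ y⟩,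
    ((ray_pre x₀).union _ h₀.1 h₀.2 (isPreconnected_sphere hE 0 ρ)).union _ (Or.inr h₁.2) h₁.1
      (ray_pre y)⟩
  refine Set.union_subset (Set.union_subset (ray_subset hx₀s) (sphere_subset ?_)) (ray_subset hy)
  linarith [le_abs_self r, le_max_left (|r| + 1) ‖y‖]

lemma eq_of_cubic_of_norm_le_one {x a b : ℂ} (ha : 3 * a ^ 3 + 4 * x * a + 8 = 0)
    (hb : 3 * b ^ 3 + 4 * x * b + 8 = 0) (ha1 : ‖a‖ ≤ 1) (hb1 : ‖b‖ ≤ 1) (hx : 9 < 4 * ‖x‖) :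
    a = b := by
  have hfac : (a - b) * (3 * (a ^ 2 + a * b + b ^ 2) + 4 * x) = 0 := by
    linear_combination ha - hb
  refine sub_eq_zero.mp ((mul_eq_zero.mp hfac).resolve_right fun h => ?_)
  have : 4 * ‖x‖ ≤ 9 := calc
    4 * ‖x‖ = ‖3 * (a ^ 2 + a * b + b ^ 2)‖ := by
      rw [eq_neg_of_add_eq_zero_left h, norm_neg, norm_mul]
      norm_num
    _ ≤ 3 * (‖a‖ ^ 2 + ‖a‖ * ‖b‖ + ‖b‖ ^ 2) := by
      rw [norm_mul, RCLike.norm_ofNat]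
      gcongr
      exact norm_add₃_le.trans_eq (by rw [norm_pow, norm_mul, norm_pow])
    _ ≤ 9 := by nlinarith [norm_nonneg a, norm_nonneg b]
  linarith

noncomputable def cardanoCbrt (z : ℂ) : ℂ := (z + (1 + z ^ 2) ^ (2⁻¹ : ℂ)) ^ (3⁻¹ : ℂ)

-- `cardanoRoot z = 2 sinh (arsinh z / 3)`
noncomputable def cardanoRoot (z : ℂ) : ℂ := cardanoCbrt z - (cardanoCbrt z)⁻¹

section Cardano

variable (z : ℂ)

lemma cardano_add_mem_slitPlane : z + (1 + z ^ 2) ^ (2⁻¹ : ℂ) ∈ slitPlane :=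
  add_mem_slitPlane_of_sq_eq (cpow_ofNat_inv_pow _ 2) (by rw [cpow_inv_two_re]; positivity)

lemma cardano_add_mul_sub :
    (z + (1 + z ^ 2) ^ (2⁻¹ : ℂ)) * ((1 + z ^ 2) ^ (2⁻¹ : ℂ) - z) = 1 := by
  linear_combination cpow_ofNat_inv_pow (1 + z ^ 2) 2

lemma cardanoCbrt_pow_three : cardanoCbrt z ^ 3 = z + (1 + z ^ 2) ^ (2⁻¹ : ℂ) :=
  cpow_ofNat_inv_pow _ 3

lemma cardanoCbrt_ne_zero : cardanoCbrt z ≠ 0 := by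
  refine fun h => slitPlane_ne_zero (cardano_add_mem_slitPlane z) ?_
  rw [← cardanoCbrt_pow_three, h, zero_pow three_ne_zero]

lemma cardanoCbrt_neg : cardanoCbrt (-z) = (cardanoCbrt z)⁻¹ := by
  have h : -z + (1 + (-z) ^ 2) ^ (2⁻¹ : ℂ) = (z + (1 + z ^ 2) ^ (2⁻¹ : ℂ))⁻¹ := by
    rw [neg_sq, ← eq_inv_of_mul_eq_one_right (cardano_add_mul_sub z)]
    ring
  rw [cardanoCbrt, cardanoCbrt, h, inv_cpow _ _ (slitPlane_arg_ne_pi (cardano_add_mem_slitPlane z))]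

lemma cardanoRoot_pow_three_add : cardanoRoot z ^ 3 + 3 * cardanoRoot z = 2 * z := by
  have hc : cardanoCbrt z * (cardanoCbrt z)⁻¹ = 1 := mul_inv_cancel₀ (cardanoCbrt_ne_zero z)
  have hinv : (cardanoCbrt z)⁻¹ ^ 3 = (1 + z ^ 2) ^ (2⁻¹ : ℂ) - z := by
    rw [inv_pow, cardanoCbrt_pow_three, ← eq_inv_of_mul_eq_one_right (cardano_add_mul_sub z)]
  rw [cardanoRoot]
  linear_combination
    cardanoCbrt_pow_three z - hinv + (3 * (cardanoCbrt z)⁻¹ - 3 * cardanoCbrt z) * hc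

lemma cardanoRoot_neg : cardanoRoot (-z) = -cardanoRoot z := by
  rw [cardanoRoot, cardanoRoot, cardanoCbrt_neg, inv_inv]
  ring

lemma cardanoRoot_zero : cardanoRoot 0 = 0 := by
  simp [cardanoRoot, cardanoCbrt]

lemma differentiableAt_cardanoRoot (hz : 1 + z ^ 2 ∈ slitPlane) :
    DifferentiableAt ℂ cardanoRoot z := by
  have hA : DifferentiableAt ℂ (fun z : ℂ => z + (1 + z ^ 2) ^ (2⁻¹ : ℂ)) z :=
    differentiableAt_id.add
      ((by fun_prop : DifferentiableAt ℂ (fun z : ℂ => 1 + z ^ 2) z).cpow_const hz)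
  have hc : DifferentiableAt ℂ cardanoCbrt z := hA.cpow_const (cardano_add_mem_slitPlane z)
  exact hc.sub (hc.inv (cardanoCbrt_ne_zero z))

end Cardano

noncomputable def cardanoRatio (z : ℂ) : ℂ := cardanoRoot z / z

noncomputable def reducedRoot (v : ℂ) : ℂ := cardanoRatio (v ^ (2⁻¹ : ℂ))

lemma cardanoRatio_even : Function.Even cardanoRatio := fun z => by
  rw [cardanoRatio, cardanoRatio, cardanoRoot_neg, neg_div_neg_eq]

lemma cardanoRatio_cubic {z : ℂ} (hz : z ≠ 0) :
    z ^ 2 * cardanoRatio z ^ 3 + 3 * cardanoRatio z = 2 := by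
  rw [cardanoRatio]
  field_simp
  linear_combination cardanoRoot_pow_three_add z

lemma differentiableAt_cardanoRatio {z : ℂ} (hz0 : z ≠ 0) (hz : 1 + z ^ 2 ∈ slitPlane) :
    DifferentiableAt ℂ cardanoRatio z :=
  (differentiableAt_cardanoRoot z hz).div differentiableAt_id hz0

lemma cardanoRatio_isBigO_one : cardanoRatio =O[𝓝[≠] 0] (fun _ => (1 : ℝ)) := by
  have h := (differentiableAt_cardanoRoot 0 (by simp)).isBigO_sub
  simp only [cardanoRoot_zero, sub_zero] at h
  obtain ⟨C, hC⟩ := h.bound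
  refine IsBigO.of_bound C ?_
  filter_upwards [nhdsWithin_le_nhds hC, self_mem_nhdsWithin] with z hCz hz
  rw [cardanoRatio, norm_div, norm_one, mul_one]
  exact (div_le_iff₀ (norm_pos_iff.mpr hz)).mpr hCz

lemma reducedRoot_cubic {v : ℂ} (hv : v ≠ 0) :
    v * reducedRoot v ^ 3 + 3 * reducedRoot v = 2 := by
  have h := cardanoRatio_cubic (z := v ^ (2⁻¹ : ℂ))
    (ne_zero_pow two_ne_zero (by rwa [cpow_ofNat_inv_pow]))
  rwa [cpow_ofNat_inv_pow] at h

lemma differentiableAt_reducedRoot {v : ℂ} (hv0 : v ≠ 0) (hv : 1 + v ∈ slitPlane) :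
    DifferentiableAt ℂ reducedRoot v :=
  cardanoRatio_even.differentiableAt_comp_cpow_inv_two hv0 fun _ hζ =>
    differentiableAt_cardanoRatio (ne_zero_pow two_ne_zero (hζ ▸ hv0)) (hζ ▸ hv)

lemma reducedRoot_isBigO_one : reducedRoot =O[𝓝[≠] 0] (fun _ => (1 : ℝ)) :=
  cardanoRatio_isBigO_one.comp_tendsto tendsto_cpow_inv_two_nhdsNE

lemma isPrimitiveRoot_exp_two_pi_I_div_three :
    IsPrimitiveRoot (exp (2 * Real.pi * I / 3)) 3 := by
  simpa using isPrimitiveRoot_exp 3 (by norm_num)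

lemma exp_neg_two_pi_I_div_three :
    exp (-(2 * Real.pi * I) / 3) = exp (2 * Real.pi * I / 3) ^ 2 := by
  rw [← exp_nat_mul, exp_eq_exp_iff_exists_int]
  exact ⟨-1, by push_cast; ring⟩

lemma SigmaS_eq_iUnion :
    SigmaS = ⋃ k : Fin 3, segment ℝ 0 (xCorner * exp (2 * Real.pi * I / 3) ^ (k : ℕ)) := by
  ext x
  simp [SigmaS, Fin.exists_fin_succ, exp_neg_two_pi_I_div_three, or_assoc]

lemma xCorner_pow_three : xCorner ^ 3 = -(81 / 4) := by
  have h : (((9 : ℝ) / 2) ^ ((2 : ℝ) / 3)) ^ 3 = 81 / 4 := by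
    rw [← Real.rpow_mul_natCast (by norm_num)]
    norm_num
  rw [xCorner, neg_pow, ← ofReal_pow, h]
  norm_num

lemma starConvex_SigmaS : StarConvex ℝ 0 SigmaS := by
  rw [SigmaS_eq_iUnion]
  exact starConvex_iUnion fun _ => (convex_segment _ _).starConvex (left_mem_segment ℝ _ _)

lemma isCompact_SigmaS : IsCompact SigmaS := by
  rw [SigmaS_eq_iUnion]
  exact isCompact_iUnion fun _ => segment_eq_image ℝ (0 : ℂ) _ ▸ isCompact_Icc.image (by fun_prop)

lemma isPreconnected_compl_SigmaS : IsPreconnected SigmaSᶜ :=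
  starConvex_SigmaS.isPreconnected_compl (by simp [Complex.rank_real_complex])
    isCompact_SigmaS.isBounded

lemma ne_zero_of_notMem_SigmaS {x : ℂ} (hx : x ∉ SigmaS) : x ≠ 0 := by
  rintro rfl
  exact hx (Or.inl (Or.inl (left_mem_segment ℝ _ _)))

lemma mem_SigmaS_of_pow_three_eq {x : ℂ} {a : ℝ} (ha0 : 0 < a) (ha1 : a ≤ 1)
    (hx : x ^ 3 = a * xCorner ^ 3) : x ∈ SigmaS := by
  have hxc : xCorner ≠ 0 := fun h => by
    have := xCorner_pow_three
    norm_num [h] at this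
  set t : ℝ := ‖x‖ / ‖xCorner‖
  have ht3 : t ^ 3 = a := by
    have := congrArg (‖·‖) hx
    simp only [norm_pow, norm_mul, norm_real, Real.norm_of_nonneg ha0.le] at this
    rw [div_pow, this]
    field_simp
  have ht0 : 0 < t := lt_of_pow_lt_pow_left₀ 3 (by positivity) (by rw [ht3]; simpa using ha0)
  have ht1 : t ≤ 1 := (pow_le_one_iff_of_nonneg ht0.le three_ne_zero).mp (ht3 ▸ ha1)
  have haC : (a : ℂ) ≠ 0 := ofReal_ne_zero.mpr ha0.ne'
  have htC : (t : ℂ) ≠ 0 := ofReal_ne_zero.mpr ht0.ne'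
  have hu : (x / (t * xCorner)) ^ 3 = 1 := by
    rw [div_pow, mul_pow, hx, ← ofReal_pow, ht3]
    field_simp
  obtain ⟨k, hk, hωk⟩ := isPrimitiveRoot_exp_two_pi_I_div_three.eq_pow_of_pow_eq_one hu
  have hx_eq : x = t • (xCorner * exp (2 * Real.pi * I / 3) ^ k) := by
    rw [hωk, real_smul]
    field_simp
  rw [SigmaS_eq_iUnion]
  refine Set.mem_iUnion.mpr ⟨⟨k, hk⟩, hx_eq ▸ ?_⟩
  exact ((convex_segment _ _).starConvex (left_mem_segment ℝ _ _)).smul_mem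
    (right_mem_segment ℝ _ _) ht0.le ht1

lemma one_add_mem_slitPlane_of_notMem_SigmaS {x : ℂ} (hx : x ∉ SigmaS) :
    1 + 81 / 4 * x⁻¹ ^ 3 ∈ slitPlane := by
  have hx0 := ne_zero_of_notMem_SigmaS hx
  by_contra h
  rw [mem_slitPlane_iff_not_le_zero, not_not, nonpos_iff] at h
  set r := (1 + 81 / 4 * x⁻¹ ^ 3).re
  have hr : 1 + 81 / 4 * x⁻¹ ^ 3 = r := Complex.ext rfl (by simpa using h.2)
  have hr1 : (1 - r : ℂ) ≠ 0 := by exact_mod_cast (by linarith [h.1] : 1 - r ≠ 0)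
  refine hx (mem_SigmaS_of_pow_three_eq (a := (1 - r)⁻¹) (inv_pos.mpr (by linarith [h.1]))
    (inv_le_one_of_one_le₀ (by linarith [h.1])) ?_)
  rw [xCorner_pow_three]
  push_cast
  field_simp
  field_simp at hr
  linear_combination hr

noncomputable def branchS (x : ℂ) : ℂ := -3 * reducedRoot (81 / 4 * x⁻¹ ^ 3) / x

lemma branchS_cubic {x : ℂ} (hx : x ≠ 0) : 3 * branchS x ^ 3 + 4 * x * branchS x + 8 = 0 := by
  have h := reducedRoot_cubic (v := 81 / 4 * x⁻¹ ^ 3) (by simp [hx])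
  rw [branchS]
  field_simp at h ⊢
  linear_combination (-1) * h

lemma branchS_sub_neg_two_div {x : ℂ} (hx : x ≠ 0) :
    branchS x - (-2 / x) = 81 / 4 * reducedRoot (81 / 4 * x⁻¹ ^ 3) ^ 3 * x⁻¹ ^ 4 := by
  have h := reducedRoot_cubic (v := 81 / 4 * x⁻¹ ^ 3) (by simp [hx])
  rw [branchS]
  field_simp at h ⊢
  linear_combination (-1) * h

lemma differentiableAt_branchS {x : ℂ} (hx : x ∉ SigmaS) : DifferentiableAt ℂ branchS x := by
  have hx0 := ne_zero_of_notMem_SigmaS hx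
  have hv : DifferentiableAt ℂ (fun x : ℂ => 81 / 4 * x⁻¹ ^ 3) x :=
    ((differentiableAt_inv hx0).pow 3).const_mul _
  exact (((differentiableAt_reducedRoot (by simp [hx0])
    (one_add_mem_slitPlane_of_notMem_SigmaS hx)).comp x hv).const_mul (-3)).div
    differentiableAt_id hx0

lemma analyticOnNhd_branchS : AnalyticOnNhd ℂ branchS SigmaSᶜ :=
  DifferentiableOn.analyticOnNhd (fun _ hx => (differentiableAt_branchS hx).differentiableWithinAt)
    isCompact_SigmaS.isClosed.isOpen_compl

lemma branchS_sub_isBigO :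
    (fun x : ℂ => branchS x - (-2 / x)) =O[cocompact ℂ] fun x : ℂ => ‖x‖⁻¹ ^ 4 := by
  have hH : (fun x : ℂ => 81 / 4 * reducedRoot (81 / 4 * x⁻¹ ^ 3) ^ 3)
      =O[cocompact ℂ] (fun _ => (1 : ℝ)) := by
    have hv := tendsto_const_mul_inv_pow_cocompact (c := 81 / 4) (by norm_num) three_ne_zero
    simpa using ((reducedRoot_isBigO_one.comp_tendsto hv).pow 3).const_mul_left (81 / 4 : ℂ)
  have hpow : (fun x : ℂ => x⁻¹ ^ 4) =O[cocompact ℂ] fun x : ℂ => ‖x‖⁻¹ ^ 4 :=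
    IsBigO.of_bound 1 (Eventually.of_forall fun x => by simp)
  refine (hH.mul hpow).congr' ?_ (Eventually.of_forall fun x => one_mul _)
  filter_upwards [(isCompact_singleton : IsCompact {(0 : ℂ)}).compl_mem_cocompact] with x hx
  exact (branchS_sub_neg_two_div hx).symm

lemma tendsto_branchS : Tendsto branchS (cocompact ℂ) (𝓝 0) := by
  have h₁ := branchS_sub_isBigO.trans_tendsto
    (by simpa using tendsto_norm_cocompact_atTop.inv_tendsto_atTop.pow 4)
  have h₂ : Tendsto (fun x : ℂ => -2 / x) (cocompact ℂ) (𝓝 0) := by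
    rw [← cobounded_eq_cocompact]
    simpa [div_eq_mul_inv] using tendsto_inv₀_cobounded.const_mul (-2 : ℂ)
  simpa using h₁.add h₂

lemma eqOn_branchS {S : ℂ → ℂ} (hA : AnalyticOnNhd ℂ S SigmaSᶜ)
    (hC : ∀ x ∈ SigmaSᶜ, 3 * S x ^ 3 + 4 * x * S x + 8 = 0)
    (hT : Tendsto S (cocompact ℂ) (𝓝 0)) : Set.EqOn S branchS SigmaSᶜ := by
  have hev : ∀ᶠ x in cocompact ℂ, S x = branchS x := by
    filter_upwards [hT.eventually (closedBall_mem_nhds 0 one_pos),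
      tendsto_branchS.eventually (closedBall_mem_nhds 0 one_pos),
      isCompact_SigmaS.compl_mem_cocompact,
      tendsto_norm_cocompact_atTop.eventually_gt_atTop (9 / 4)] with x h₁ h₂ hx hx'
    exact eq_of_cubic_of_norm_le_one (hC x hx) (branchS_cubic (ne_zero_of_notMem_SigmaS hx))
      (by simpa using h₁) (by simpa using h₂) (by linarith)
  obtain ⟨K, hK, hKS⟩ := hasBasis_cocompact.eventually_iff.mp hev
  obtain ⟨z₀, hz₀K, hz₀⟩ :=
    nonempty_of_mem (inter_mem hK.compl_mem_cocompact isCompact_SigmaS.compl_mem_cocompact)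
  exact hA.eqOn_of_preconnected_of_eventuallyEq analyticOnNhd_branchS
    isPreconnected_compl_SigmaS hz₀ (eventually_of_mem (hK.isClosed.isOpen_compl.mem_nhds hz₀K) hKS)

/-- There is a unique function `S`, analytic on `ℂ ∖ Σ_S`, satisfying the cubic
`3S(x)³ + 4xS(x) + 8 = 0` there and `S(x) → 0` as `x → ∞`; moreover it satisfies
`S(x) = −2/x + O(|x|⁻⁴)` as `x → ∞`. -/
theorem cubic_branch_S_exists_unique :
    ∃ S : ℂ → ℂ,
      (AnalyticOnNhd ℂ S SigmaSᶜ ∧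
        (∀ x ∈ SigmaSᶜ, 3 * S x ^ 3 + 4 * x * S x + 8 = 0) ∧
        Tendsto S (cocompact ℂ) (nhds 0)) ∧
      ((fun x : ℂ => S x - (-2 / x)) =O[cocompact ℂ] fun x : ℂ => ‖x‖⁻¹ ^ 4) ∧
      (∀ S' : ℂ → ℂ,
        (AnalyticOnNhd ℂ S' SigmaSᶜ ∧
          (∀ x ∈ SigmaSᶜ, 3 * S' x ^ 3 + 4 * x * S' x + 8 = 0) ∧
          Tendsto S' (cocompact ℂ) (nhds 0)) →
        Set.EqOn S' S SigmaSᶜ) :=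
  ⟨branchS,
    ⟨analyticOnNhd_branchS, fun _ hx => branchS_cubic (ne_zero_of_notMem_SigmaS hx),
      tendsto_branchS⟩,
    branchS_sub_isBigO, fun _ ⟨hA, hC, hT⟩ => eqOn_branchS hA hC hT⟩
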